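/- Let n, ℓ, m be positive integers. Let (S⁰, R⁰) and (S¹, R¹) be two joint probability distributions on {0,1}^n × {0,1}^ℓ. For α ∈ (0,1) and b ∈ {0,1}, let D̂^α_b be the probability distribution on {0,1}^{n+ℓ} obtained by sampling (s, r) from (S^b, R^b) and outputting (y₁,…,y_n, r), where each y_i independently equals s_i with probability (1+α)/2 and equals 1−s_i with probability (1−α)/2. Suppose that ‖D̂^{2/3}_0 − D̂^{2/3}_1‖ > 1 − 2^{−m} and ‖D̂^{1/3}_0 − D̂^{1/3}_1‖ < 2^{−m}, where ‖·‖ is total variation distance. Then 2^m − 1 ≤ 2^{(3n+1)/2}; in particular n = Ω(m). -/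
import Mathlib


noncomputable section

/-- The polarized distribution `D̂^α_b` on `{0,1}^n × {0,1}^ℓ` obtained from the joint
distribution `P` of `(S^b, R^b)`: sample `(s,r) ∼ P` and output `(y, r)` where each `y_i`
independently equals `s_i` with probability `(1+α)/2` and `1 - s_i` with probability
`(1-α)/2`. -/
def polarized (n ℓ : ℕ) (P : ((Fin n → Bool) × (Fin ℓ → Bool)) → ℝ) (α : ℝ) :
    ((Fin n → Bool) × (Fin ℓ → Bool)) → ℝ :=
  fun yr => ∑ s : Fin n → Bool,
    P (s, yr.2) * ∏ i : Fin n, (if yr.1 i = s i then (1 + α) / 2 else (1 - α) / 2)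

def Tmat (n : ℕ) (y y' : Fin n → Bool) : ℝ :=
  ∏ i : Fin n, (if y i = y' i then (3:ℝ)/2 else -(1/2))

lemma Tmat_abs_sum (n : ℕ) (y' : Fin n → Bool) :
    ∑ y : Fin n → Bool, |Tmat n y y'| = 2 ^ n := by
  have h : ∀ y : Fin n → Bool, |Tmat n y y'| =
      ∏ i : Fin n, |if y i = y' i then (3:ℝ)/2 else -(1/2)| := by
    intro y; rw [Tmat, Finset.abs_prod]
  simp only [h]
  rw [← Fintype.prod_sum (fun i b => |if b = y' i then (3:ℝ)/2 else -(1/2)|)]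
  have h2 : ∀ i : Fin n, (∑ b : Bool, |if b = y' i then (3:ℝ)/2 else -(1/2)|) = 2 := by
    intro i
    have h1 : |(1:ℝ)/2| = 1/2 := abs_of_nonneg (by norm_num)
    have h3 : |(3:ℝ)/2| = 3/2 := abs_of_nonneg (by norm_num)
    cases y' i <;> simp only [Fintype.sum_bool, abs_neg, Bool.true_eq_false,
      Bool.false_eq_true, ite_true, ite_false, h1, h3] <;> norm_num
  rw [Finset.prod_congr rfl (fun i _ => h2 i)]
  simp

lemma key (n ℓ : ℕ) (P : ((Fin n → Bool) × (Fin ℓ → Bool)) → ℝ)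
    (y : Fin n → Bool) (r : Fin ℓ → Bool) :
    polarized n ℓ P (2/3) (y, r)
      = ∑ y' : Fin n → Bool, Tmat n y y' * polarized n ℓ P (1/3) (y', r) := by
  simp only [polarized, Finset.mul_sum]
  rw [Finset.sum_comm]
  refine Finset.sum_congr rfl (fun s _ => ?_)
  have h : ∀ y' : Fin n → Bool,
      Tmat n y y' * (P (s, r) * ∏ i : Fin n, (if y' i = s i then (1 + 1/3 : ℝ) / 2 else (1 - 1/3) / 2))
        = P (s, r) * ∏ i : Fin n,
            ((if y i = y' i then (3:ℝ)/2 else -(1/2)) * (if y' i = s i then (1 + 1/3 : ℝ) / 2 else (1 - 1/3) / 2)) := by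
    intro y'
    rw [Finset.prod_mul_distrib, Tmat]; ring
  simp only [h]
  rw [← Finset.mul_sum,
    ← Fintype.prod_sum (fun i b => (if y i = b then (3:ℝ)/2 else -(1/2)) * (if b = s i then (1 + 1/3 : ℝ) / 2 else (1 - 1/3) / 2))]
  congr 1
  refine Finset.prod_congr rfl (fun i _ => ?_)
  have hb : ∀ a b : Bool, (if a = b then ((1:ℝ) + 2/3)/2 else (1-2/3)/2)
      = ∑ j : Bool, (if a = j then (3:ℝ)/2 else -(1/2)) * (if j = b then ((1:ℝ)+1/3)/2 else (1-1/3)/2) := by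
    intro a b; cases a <;> cases b <;> simp [Fintype.sum_bool] <;> norm_num
  exact hb (y i) (s i)

/-- If an `(n,ℓ,m)`-special polarizer exists, i.e. joint distributions
`P₀, P₁` on `{0,1}^n × {0,1}^ℓ` whose polarizations at `α = 2/3` have total variation
distance greater than `1 - 2^{-m}` while their polarizations at `α = 1/3` have total
variation distance less than `2^{-m}`, then `2^m - 1 ≤ 2^{(3n+1)/2}`; in particular
`n = Ω(m)`. -/
theorem stmt18 (n ℓ m : ℕ) (hn : 0 < n) (hℓ : 0 < ℓ) (hm : 0 < m)
    (P₀ P₁ : ((Fin n → Bool) × (Fin ℓ → Bool)) → ℝ)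
    (hP₀ : ∀ z, 0 ≤ P₀ z) (hP₀1 : (∑ z : (Fin n → Bool) × (Fin ℓ → Bool), P₀ z) = 1)
    (hP₁ : ∀ z, 0 ≤ P₁ z) (hP₁1 : (∑ z : (Fin n → Bool) × (Fin ℓ → Bool), P₁ z) = 1)
    (hfar : (1 / 2) * ∑ z : (Fin n → Bool) × (Fin ℓ → Bool),
        |polarized n ℓ P₀ (2 / 3) z - polarized n ℓ P₁ (2 / 3) z|
      > 1 - (2 : ℝ) ^ (-(m : ℝ)))
    (hclose : (1 / 2) * ∑ z : (Fin n → Bool) × (Fin ℓ → Bool),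
        |polarized n ℓ P₀ (1 / 3) z - polarized n ℓ P₁ (1 / 3) z|
      < (2 : ℝ) ^ (-(m : ℝ))) :
    (2 : ℝ) ^ (m : ℝ) - 1 ≤ (2 : ℝ) ^ ((3 * (n : ℝ) + 1) / 2) := by

  set ε : ℝ := (2 : ℝ) ^ (-(m : ℝ)) with hε
  have hεpos : 0 < ε := Real.rpow_pos_of_pos (by norm_num) _
  set f : ((Fin n → Bool) × (Fin ℓ → Bool)) → ℝ :=
    fun z => |polarized n ℓ P₀ (1/3) z - polarized n ℓ P₁ (1/3) z| with hf
  -- TV contraction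
  have hTV : (∑ z : (Fin n → Bool) × (Fin ℓ → Bool),
      |polarized n ℓ P₀ (2/3) z - polarized n ℓ P₁ (2/3) z|)
      ≤ 2 ^ n * ∑ z : (Fin n → Bool) × (Fin ℓ → Bool), f z := by
    have expand : ∀ (y : Fin n → Bool) (r : Fin ℓ → Bool),
        polarized n ℓ P₀ (2/3) (y, r) - polarized n ℓ P₁ (2/3) (y, r)
          = ∑ y' : Fin n → Bool, Tmat n y y'
              * (polarized n ℓ P₀ (1/3) (y', r) - polarized n ℓ P₁ (1/3) (y', r)) := by
      intro y r
      rw [key n ℓ P₀ y r, key n ℓ P₁ y r, ← Finset.sum_sub_distrib]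
      exact Finset.sum_congr rfl (fun y' _ => by ring)
    calc (∑ z : (Fin n → Bool) × (Fin ℓ → Bool),
          |polarized n ℓ P₀ (2/3) z - polarized n ℓ P₁ (2/3) z|)
        = ∑ y : Fin n → Bool, ∑ r : Fin ℓ → Bool,
            |polarized n ℓ P₀ (2/3) (y, r) - polarized n ℓ P₁ (2/3) (y, r)| :=
          Fintype.sum_prod_type _
      _ ≤ ∑ y : Fin n → Bool, ∑ r : Fin ℓ → Bool, ∑ y' : Fin n → Bool,
            |Tmat n y y'| * f (y', r) := by
          refine Finset.sum_le_sum fun y _ => Finset.sum_le_sum fun r _ => ?_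
          rw [expand y r]
          refine (Finset.abs_sum_le_sum_abs _ _).trans ?_
          exact Finset.sum_le_sum fun y' _ => le_of_eq (abs_mul _ _)
      _ = ∑ y' : Fin n → Bool, ∑ y : Fin n → Bool, ∑ r : Fin ℓ → Bool,
            |Tmat n y y'| * f (y', r) := by
          rw [show (∑ y : Fin n → Bool, ∑ r : Fin ℓ → Bool, ∑ y' : Fin n → Bool,
              |Tmat n y y'| * f (y', r))
            = ∑ y : Fin n → Bool, ∑ y' : Fin n → Bool, ∑ r : Fin ℓ → Bool,
              |Tmat n y y'| * f (y', r) from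
            Finset.sum_congr rfl fun y _ => Finset.sum_comm]
          exact Finset.sum_comm
      _ = ∑ y' : Fin n → Bool, (2 ^ n) * ∑ r : Fin ℓ → Bool, f (y', r) := by
          refine Finset.sum_congr rfl fun y' _ => ?_
          rw [← Finset.sum_mul_sum, Tmat_abs_sum]
      _ = 2 ^ n * ∑ z : (Fin n → Bool) × (Fin ℓ → Bool), f z := by
          rw [← Finset.mul_sum, Fintype.sum_prod_type]
  -- arithmetic
  have hS13pos : (0:ℝ) < 2 ^ n := by positivity
  have h1 : 1 - ε < 2 ^ n * ε := by
    calc 1 - ε < (1/2) * ∑ z : (Fin n → Bool) × (Fin ℓ → Bool),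
          |polarized n ℓ P₀ (2/3) z - polarized n ℓ P₁ (2/3) z| := hfar
      _ ≤ 2 ^ n * ((1/2) * ∑ z : (Fin n → Bool) × (Fin ℓ → Bool), f z) := by
          rw [hf]; nlinarith [hTV]
      _ < 2 ^ n * ε := by
          refine mul_lt_mul_of_pos_left ?_ hS13pos
          exact hclose
  have hunit : (2:ℝ) ^ (m:ℝ) * ε = 1 := by
    rw [hε, ← Real.rpow_add (by norm_num)]
    simp
  have hmpos : (0:ℝ) < (2:ℝ) ^ (m:ℝ) := Real.rpow_pos_of_pos (by norm_num) _
  have h2 : (2:ℝ) ^ (m:ℝ) - 1 < 2 ^ n := by nlinarith [mul_lt_mul_of_pos_left h1 hmpos]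
  have h3 : ((2:ℝ) ^ n : ℝ) ≤ (2:ℝ) ^ ((3 * (n:ℝ) + 1) / 2) := by
    rw [← Real.rpow_natCast 2 n]
    refine Real.rpow_le_rpow_of_exponent_le (by norm_num) ?_
    have hn0 : (0:ℝ) ≤ (n:ℝ) := Nat.cast_nonneg n
    linarith
  linarith
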